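/- arXiv:1807.02014 — 8 statements merged into one kernel-verified Lean document; each statement's English description precedes it below -/
import Mathlib

section
/- For every crossed interval group G, the family RSt^G = {RSt^G_φ} of right-stabilizer subgroups is itself a congruence family on G; in particular, for every φ : ⟪m⟫ → ⟪n⟫ and every y ∈ G_n one has φ*(y)·RSt^G_φ·φ*(y)⁻¹ = RSt^G_{φ^y}. -/
open CategoryTheory

/-! ## The category of intervals ∇

Objects of `∇` are the totally ordered sets `⟪n⟫ = {-∞, 1, …, n, ∞}`, which we
encode as `Fin (n + 2)` (with `0` playing the role of `-∞` and `Fin.last (n+1)`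
the role of `∞`).  Morphisms are order-preserving maps sending `-∞` to `-∞` and
`∞` to `∞`. -/

/-- The interior `{1, …, n}` of `⟪n⟫ = Fin (n + 2)`, i.e. everything except the two
endpoints `-∞` and `∞`. -/
def nablaInterior (n : ℕ) : Set (Fin (n + 2)) :=
  {i | i ≠ 0 ∧ i ≠ Fin.last (n + 1)}

/-- A morphism `⟪m⟫ → ⟪n⟫` of the category of intervals `∇`: an order-preserving map
sending `-∞` to `-∞` and `∞` to `∞`. -/
structure NablaHom (m n : ℕ) where
  toFun : Fin (m + 2) → Fin (n + 2)
  monotone' : Monotone toFun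
  map_bot' : toFun 0 = 0
  map_top' : toFun (Fin.last (m + 1)) = Fin.last (n + 1)

namespace NablaHom

@[ext]
theorem ext {m n : ℕ} {f g : NablaHom m n} (h : ∀ i, f.toFun i = g.toFun i) : f = g := by
  cases f; cases g
  simp only [mk.injEq]
  funext i
  exact h i

/-- The identity morphism of `⟪n⟫`. -/
def id (n : ℕ) : NablaHom n n :=
  ⟨fun i => i, fun _ _ h => h, rfl, rfl⟩

/-- Composition `ψ ∘ φ` of morphisms of `∇`. -/
def comp {l m n : ℕ} (ψ : NablaHom m n) (φ : NablaHom l m) : NablaHom l n where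
  toFun := ψ.toFun ∘ φ.toFun
  monotone' := ψ.monotone'.comp φ.monotone'
  map_bot' := by
    show ψ.toFun (φ.toFun 0) = 0
    rw [φ.map_bot', ψ.map_bot']
  map_top' := by
    show ψ.toFun (φ.toFun (Fin.last (l + 1))) = Fin.last (n + 1)
    rw [φ.map_top', ψ.map_top']

@[simp] theorem comp_id {m n : ℕ} (φ : NablaHom m n) : φ.comp (id m) = φ := rfl

@[simp] theorem id_comp {m n : ℕ} (φ : NablaHom m n) : (id n).comp φ = φ := rfl

theorem comp_assoc {k l m n : ℕ} (χ : NablaHom m n) (ψ : NablaHom l m) (φ : NablaHom k l) :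
    (χ.comp ψ).comp φ = χ.comp (ψ.comp φ) := rfl

/-- A morphism `φ : ⟪m⟫ → ⟪n⟫` of `∇` is *active* if `φ⁻¹{-∞} = {-∞}` and
`φ⁻¹{∞} = {∞}`. -/
def Active {m n : ℕ} (φ : NablaHom m n) : Prop :=
  (∀ i, φ.toFun i = 0 → i = 0) ∧
  (∀ i, φ.toFun i = Fin.last (n + 1) → i = Fin.last (m + 1))

/-- A morphism `φ : ⟪m⟫ → ⟪n⟫` of `∇` is *inert* if it restricts to a bijection
`φ⁻¹({1,…,n}) → {1,…,n}`. -/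
def Inert {m n : ℕ} (φ : NablaHom m n) : Prop :=
  Set.BijOn φ.toFun (φ.toFun ⁻¹' nablaInterior n) (nablaInterior n)

end NablaHom

/-- The category of intervals `∇`. -/
def Nabla : Type := ℕ

instance : Category Nabla where
  Hom m n := NablaHom m n
  id n := NablaHom.id n
  comp f g := g.comp f
  id_comp f := NablaHom.comp_id f
  comp_id f := NablaHom.id_comp f
  assoc _ _ _ := rfl

/-! ## Crossed interval groups -/

/-- A crossed interval group `G`: a presheaf of groups `n ↦ G_n` on `∇` (with
`φ* = map φ : G_n → G_m` for `φ : ⟪m⟫ → ⟪n⟫`) together with a left action of the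
group `G_n` on each hom-set `∇(⟪m⟫, ⟪n⟫)` (written `φ^x = act x φ`), subject to the
crossed compatibilities `φ*(x y) = (φ^y)*(x) · φ*(y)` and
`(φ ∘ ψ)^x = φ^x ∘ ψ^{φ*(x)}`. -/
structure CrossedIntervalGroup where
  grp : ℕ → Type
  [groupStr : ∀ n, Group (grp n)]
  map : ∀ {m n : ℕ}, NablaHom m n → grp n → grp m
  act : ∀ {m n : ℕ}, grp n → NablaHom m n → NablaHom m n
  map_id : ∀ {n : ℕ} (x : grp n), map (NablaHom.id n) x = x
  map_comp : ∀ {l m n : ℕ} (ψ : NablaHom m n) (φ : NablaHom l m) (x : grp n),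
      map (ψ.comp φ) x = map φ (map ψ x)
  act_one : ∀ {m n : ℕ} (φ : NablaHom m n), act 1 φ = φ
  act_mul : ∀ {m n : ℕ} (x y : grp n) (φ : NablaHom m n),
      act (x * y) φ = act x (act y φ)
  act_id : ∀ {n : ℕ} (x : grp n), act x (NablaHom.id n) = NablaHom.id n
  map_mul : ∀ {m n : ℕ} (φ : NablaHom m n) (x y : grp n),
      map φ (x * y) = map (act y φ) x * map φ y
  act_comp : ∀ {l m n : ℕ} (x : grp n) (φ : NablaHom m n) (ψ : NablaHom l m),
      act x (φ.comp ψ) = (act x φ).comp (act (map φ x) ψ)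

attribute [instance] CrossedIntervalGroup.groupStr

/-! ## Right stabilizers and congruence families -/

/-- The subgroup `RSt^G_φ ⊆ G_m` of right stabilizers of `φ : ⟪m⟫ → ⟪n⟫`: elements
`x ∈ G_m` with `φ ∘ ψ^x = φ ∘ ψ` for every `ψ : ⟪l⟫ → ⟪m⟫`. -/
def RSt (G : CrossedIntervalGroup) {m n : ℕ} (φ : NablaHom m n) : Subgroup (G.grp m) where
  carrier := {x | ∀ (l : ℕ) (ψ : NablaHom l m), φ.comp (G.act x ψ) = φ.comp ψ}
  one_mem' := by
    intro l ψ
    rw [G.act_one]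
  mul_mem' := by
    intro a b ha hb l ψ
    rw [G.act_mul]
    exact (ha l (G.act b ψ)).trans (hb l ψ)
  inv_mem' := by
    intro a ha l ψ
    have h := ha l (G.act a⁻¹ ψ)
    rw [← G.act_mul, mul_inv_cancel, G.act_one] at h
    exact h.symm

/-- A congruence family `K = {K_φ}` on a crossed interval group `G`. -/
structure CongruenceFamily (G : CrossedIntervalGroup) where
  K : ∀ {m n : ℕ}, NablaHom m n → Subgroup (G.grp m)
  le_rst : ∀ {m n : ℕ} (φ : NablaHom m n), K φ ≤ RSt G φ
  le_post : ∀ {m n k : ℕ} (φ : NablaHom m n) (χ : NablaHom n k), K φ ≤ K (χ.comp φ)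
  map_pre : ∀ {l m n : ℕ} (φ : NablaHom m n) (ψ : NablaHom l m),
      ∀ x ∈ K φ, G.map ψ x ∈ K (φ.comp ψ)
  conj_act : ∀ {m n : ℕ} (φ : NablaHom m n) (y : G.grp n) (x : G.grp m),
      x ∈ K (G.act y φ) ↔ ∃ u ∈ K φ, x = G.map φ y * u * (G.map φ y)⁻¹


theorem CrossedIntervalGroup.map_one (G : CrossedIntervalGroup) {m n : ℕ}
    (φ : NablaHom m n) : G.map φ (1 : G.grp n) = 1 := by
  have h := G.map_mul φ 1 1
  rw [mul_one, G.act_one] at h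
  exact (left_eq_mul.mp h)

theorem rst_mem {G : CrossedIntervalGroup} {m n : ℕ} {φ : NablaHom m n} {x : G.grp m}
    (hx : x ∈ RSt G φ) (l : ℕ) (ψ : NablaHom l m) :
    φ.comp (G.act x ψ) = φ.comp ψ := hx l ψ

theorem rst_fwd (G : CrossedIntervalGroup) {m n : ℕ} (φ : NablaHom m n) (y : G.grp n)
    (u : G.grp m) (hu : u ∈ RSt G φ) :
    G.map φ y * u * (G.map φ y)⁻¹ ∈ RSt G (G.act y φ) := by
  intro l ψ
  set w := G.map φ y with hw
  set ψ' := G.act w⁻¹ ψ with hψ'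
  have hψ : ψ = G.act w ψ' := by rw [hψ', ← G.act_mul, mul_inv_cancel, G.act_one]
  calc (G.act y φ).comp (G.act (w * u * w⁻¹) ψ)
      = (G.act y φ).comp (G.act w (G.act u ψ')) := by
        rw [G.act_mul, G.act_mul]
    _ = G.act y (φ.comp (G.act u ψ')) := (G.act_comp y φ _).symm
    _ = G.act y (φ.comp ψ') := by rw [rst_mem hu l ψ']
    _ = (G.act y φ).comp (G.act w ψ') := G.act_comp y φ ψ'
    _ = (G.act y φ).comp ψ := by rw [← hψ]

theorem rst_conj (G : CrossedIntervalGroup) {m n : ℕ} (φ : NablaHom m n) (y : G.grp n)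
    (x : G.grp m) :
    x ∈ RSt G (G.act y φ) ↔ ∃ u ∈ RSt G φ, x = G.map φ y * u * (G.map φ y)⁻¹ := by
  constructor
  · intro hx
    set w := G.map φ y with hw
    have hmapinv : G.map (G.act y φ) y⁻¹ = w⁻¹ := by
      have h := G.map_mul φ y⁻¹ y
      rw [inv_mul_cancel, G.map_one] at h
      exact eq_inv_of_mul_eq_one_left h.symm
    have h2 := rst_fwd G (G.act y φ) y⁻¹ x hx
    rw [hmapinv, ← G.act_mul, inv_mul_cancel, G.act_one, inv_inv] at h2
    refine ⟨w⁻¹ * x * w, h2, by group⟩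
  · rintro ⟨u, hu, rfl⟩
    exact rst_fwd G φ y u hu

/-! ## Statement 4 -/

/-- For every crossed interval group `G`, the family `RSt^G = {RSt^G_φ}` of
right-stabilizer subgroups is itself a congruence family on `G`; in particular, for
every `φ : ⟪m⟫ → ⟪n⟫` and every `y ∈ G_n` one has
`φ*(y)·RSt^G_φ·φ*(y)⁻¹ = RSt^G_{φ^y}`. -/
theorem statement4 (G : CrossedIntervalGroup) :
    (∃ C : CongruenceFamily G, ∀ {m n : ℕ} (φ : NablaHom m n), C.K φ = RSt G φ) ∧
    (∀ {m n : ℕ} (φ : NablaHom m n) (y : G.grp n) (x : G.grp m),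
      x ∈ RSt G (G.act y φ) ↔ ∃ u ∈ RSt G φ, x = G.map φ y * u * (G.map φ y)⁻¹) := by
  constructor
  · refine ⟨⟨fun {m n} φ => RSt G φ, fun φ => le_rfl, ?_, ?_, fun φ y x => rst_conj G φ y x⟩,
      fun φ => rfl⟩
    · intro m n k φ χ x hx l ψ
      show (χ.comp φ).comp (G.act x ψ) = (χ.comp φ).comp ψ
      rw [NablaHom.comp_assoc, rst_mem hx l ψ, NablaHom.comp_assoc]
    · intro l m n φ ψ x hx k χ
      show (φ.comp ψ).comp (G.act (G.map ψ x) χ) = (φ.comp ψ).comp χ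
      calc (φ.comp ψ).comp (G.act (G.map ψ x) χ)
          = (φ.comp (G.act x ψ)).comp (G.act (G.map ψ x) χ) := by rw [rst_mem hx l ψ]
        _ = φ.comp ((G.act x ψ).comp (G.act (G.map ψ x) χ)) := NablaHom.comp_assoc ..
        _ = φ.comp (G.act x (ψ.comp χ)) := by rw [← G.act_comp]
        _ = φ.comp (ψ.comp χ) := rst_mem hx k (ψ.comp χ)
        _ = (φ.comp ψ).comp χ := (NablaHom.comp_assoc ..).symm
  · exact fun φ y x => rst_conj G φ y x
end

section
/- Let K be a congruence family on a crossed interval group G, let φ : ⟪m⟫ → ⟪n⟫ and ψ : ⟪n⟫ → ⟪k⟫ be morphisms in ∇, and let x ∈ G_m, y ∈ G_n. Then for every u ∈ K_φ and every v ∈ K_ψ one has φ*(v·y)·u·x ∈ K_{ψ∘φ^y}·(φ*(y)·x), and ψ∘φ^{v·y} = ψ∘φ^y. Consequently the coset of φ*(y)·x in K_{ψ∘φ^y}\G_m depends only on the cosets K_φ·x ∈ K_φ\G_m and K_ψ·y ∈ K_ψ\G_n. -/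
open CategoryTheory

/-! ## Statement 5 -/

theorem statement5_aux (G : CrossedIntervalGroup) (K : CongruenceFamily G)
    {m n k : ℕ} (φ : NablaHom m n) (ψ : NablaHom n k)
    (x : G.grp m) (y : G.grp n) {u : G.grp m} (hu : u ∈ K.K φ)
    {v : G.grp n} (hv : v ∈ K.K ψ) :
    (G.map φ (v * y) * u * x) * (G.map φ y * x)⁻¹ ∈ K.K (ψ.comp (G.act y φ)) ∧
      ψ.comp (G.act (v * y) φ) = ψ.comp (G.act y φ) := by
  constructor
  · have h2 : G.map φ y * u * (G.map φ y)⁻¹ ∈ K.K (G.act y φ) :=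
      (K.conj_act φ y _).mpr ⟨u, hu, rfl⟩
    have h3 : G.map φ y * u * (G.map φ y)⁻¹ ∈ K.K (ψ.comp (G.act y φ)) :=
      K.le_post _ ψ h2
    have h4 : G.map (G.act y φ) v ∈ K.K (ψ.comp (G.act y φ)) :=
      K.map_pre ψ (G.act y φ) v hv
    have heq : (G.map φ (v * y) * u * x) * (G.map φ y * x)⁻¹ =
        G.map (G.act y φ) v * (G.map φ y * u * (G.map φ y)⁻¹) := by
      rw [G.map_mul]; group
    rw [heq]; exact mul_mem h4 h3
  · rw [G.act_mul]
    exact K.le_rst ψ hv _ _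

/-- Let `K` be a congruence family on a crossed interval group `G`, let
`φ : ⟪m⟫ → ⟪n⟫` and `ψ : ⟪n⟫ → ⟪k⟫` be morphisms in `∇`, and let `x ∈ G_m`, `y ∈ G_n`.
Then for every `u ∈ K_φ` and every `v ∈ K_ψ` one has
`φ*(v·y)·u·x ∈ K_{ψ∘φ^y}·(φ*(y)·x)` and `ψ∘φ^{v·y} = ψ∘φ^y`.  Consequently the right
coset of `φ*(y)·x` in `K_{ψ∘φ^y}\G_m` depends only on the cosets
`K_φ·x ∈ K_φ\G_m` and `K_ψ·y ∈ K_ψ\G_n`. -/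
theorem statement5 (G : CrossedIntervalGroup) (K : CongruenceFamily G)
    {m n k : ℕ} (φ : NablaHom m n) (ψ : NablaHom n k)
    (x : G.grp m) (y : G.grp n) :
    (∀ u ∈ K.K φ, ∀ v ∈ K.K ψ,
      (G.map φ (v * y) * u * x) * (G.map φ y * x)⁻¹ ∈ K.K (ψ.comp (G.act y φ)) ∧
      ψ.comp (G.act (v * y) φ) = ψ.comp (G.act y φ)) ∧
    (∀ (x' : G.grp m) (y' : G.grp n),
      x * x'⁻¹ ∈ K.K φ → y * y'⁻¹ ∈ K.K ψ →
      ψ.comp (G.act y φ) = ψ.comp (G.act y' φ) ∧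
      (G.map φ y * x) * (G.map φ y' * x')⁻¹ ∈ K.K (ψ.comp (G.act y φ))) := by
  refine ⟨fun u hu v hv => statement5_aux G K φ ψ x y hu hv, ?_⟩
  intro x' y' hx hy
  obtain ⟨hmem, heq⟩ := statement5_aux G K φ ψ x' y' hx hy
  have hy' : (y * y'⁻¹) * y' = y := by group
  have hx' : (x * x'⁻¹) * x' = x := by group
  rw [hy'] at hmem heq
  have hact : ψ.comp (G.act y φ) = ψ.comp (G.act y' φ) := heq
  refine ⟨hact, ?_⟩
  rw [hact]
  have : G.map φ y * (x * x'⁻¹) * x' = G.map φ y * x := by group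
  rw [this] at hmem
  exact hmem
end

section
/- Let I and A denote the classes of inert and active morphisms in the category of intervals ∇, respectively. Then (I, A) is an orthogonal factorization system on ∇: both classes contain all isomorphisms and are closed under composition; every morphism of ∇ is of the form μ∘ρ with ρ ∈ I and μ ∈ A; and for every commutative square ψ∘ρ = μ∘φ with ρ ∈ I and μ ∈ A there is a unique diagonal χ with χ∘ρ = φ and μ∘χ = ψ. -/
open CategoryTheory

/-! ## Orthogonal factorization systems -/

/-- An orthogonal factorization system `(E, M)` on a category `C`: both classes
contain all isomorphisms and are closed under composition, every morphism factors as
a morphism of `E` followed by a morphism of `M`, and every commutative square with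
left edge in `E` and right edge in `M` admits a unique diagonal filler. -/
structure OrthFactSys (C : Type*) [Category C]
    (E M : MorphismProperty C) : Prop where
  iso_mem_left : ∀ {X Y : C} (f : X ⟶ Y), IsIso f → E f
  iso_mem_right : ∀ {X Y : C} (f : X ⟶ Y), IsIso f → M f
  comp_mem_left : ∀ {X Y Z : C} (f : X ⟶ Y) (g : Y ⟶ Z), E f → E g → E (f ≫ g)
  comp_mem_right : ∀ {X Y Z : C} (f : X ⟶ Y) (g : Y ⟶ Z), M f → M g → M (f ≫ g)
  factor : ∀ {X Y : C} (f : X ⟶ Y),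
      ∃ (Z : C) (e : X ⟶ Z) (m : Z ⟶ Y), E e ∧ M m ∧ e ≫ m = f
  diagonal : ∀ {A B X Y : C} (e : A ⟶ B) (f : A ⟶ X) (g : B ⟶ Y) (m : X ⟶ Y),
      E e → M m → e ≫ g = f ≫ m →
      ∃! d : B ⟶ X, e ≫ d = f ∧ d ≫ m = g

/-- The class of inert morphisms of `∇`, as a class of morphisms of the category
`Nabla`. -/
def nablaInert : MorphismProperty Nabla := fun m n (f : NablaHom m n) => f.Inert

/-- The class of active morphisms of `∇`, as a class of morphisms of the category
`Nabla`. -/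
def nablaActive : MorphismProperty Nabla := fun m n (f : NablaHom m n) => f.Active


/-! ## Auxiliary lemmas -/

section Aux

lemma mem_interior_iff {n : ℕ} (i : Fin (n + 2)) :
    i ∈ nablaInterior n ↔ 0 < i.val ∧ i.val < n + 1 := by
  have hi := i.isLt
  simp only [nablaInterior, Set.mem_setOf_eq, Ne, Fin.ext_iff, Fin.val_zero, Fin.val_last]
  omega

lemma inert_surjective {m n : ℕ} {f : NablaHom m n} (h : f.Inert) :
    Function.Surjective f.toFun := by
  intro y
  by_cases h0 : y = 0
  · exact ⟨0, by rw [f.map_bot', h0]⟩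
  by_cases h1 : y = Fin.last (n + 1)
  · exact ⟨Fin.last (m + 1), by rw [f.map_top', h1]⟩
  obtain ⟨x, _, hfx⟩ := h.2.2 (show y ∈ nablaInterior n from ⟨h0, h1⟩)
  exact ⟨x, hfx⟩

lemma active_of_leftInverse {m n : ℕ} {f : NablaHom m n} {g : NablaHom n m}
    (hgf : ∀ i, g.toFun (f.toFun i) = i) : f.Active := by
  constructor
  · intro i hi
    have h := hgf i
    rw [hi, g.map_bot'] at h; exact h.symm
  · intro i hi
    have h := hgf i
    rw [hi, g.map_top'] at h; exact h.symm

lemma inert_of_inverse {m n : ℕ} {f : NablaHom m n} {g : NablaHom n m}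
    (hgf : ∀ i, g.toFun (f.toFun i) = i)
    (hfg : ∀ i, f.toFun (g.toFun i) = i) : f.Inert := by
  refine ⟨fun x hx => hx, fun x _ y _ h => by rw [← hgf x, ← hgf y, h], fun y hy => ?_⟩
  refine ⟨g.toFun y, ?_, hfg y⟩
  show f.toFun (g.toFun y) ∈ nablaInterior n
  rw [hfg]; exact hy

lemma active_comp {l m n : ℕ} {f : NablaHom l m} {g : NablaHom m n}
    (hf : f.Active) (hg : g.Active) : (g.comp f).Active := by
  constructor
  · intro i hi
    exact hf.1 _ (hg.1 _ hi)
  · intro i hi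
    exact hf.2 _ (hg.2 _ hi)

lemma inert_comp {l m n : ℕ} {f : NablaHom l m} {g : NablaHom m n}
    (hf : f.Inert) (hg : g.Inert) : (g.comp f).Inert := by
  have hfx : ∀ x : Fin (l + 2), g.toFun (f.toFun x) ∈ nablaInterior n →
      f.toFun x ∈ nablaInterior m := by
    intro x hx
    have hx' : g.toFun (f.toFun x) ≠ 0 ∧ g.toFun (f.toFun x) ≠ Fin.last (n + 1) := hx
    constructor
    · intro h; apply hx'.1; rw [h, g.map_bot']
    · intro h; apply hx'.2; rw [h, g.map_top']
  refine ⟨fun x hx => hx, ?_, ?_⟩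
  · intro x hx y hy hxy
    have hx2 : g.toFun (f.toFun x) ∈ nablaInterior n := hx
    have hy2 : g.toFun (f.toFun y) ∈ nablaInterior n := hy
    have hfxy : f.toFun x = f.toFun y := hg.2.1 hx2 hy2 hxy
    exact hf.2.1 (hfx x hx2) (hfx y hy2) hfxy
  · intro y hy
    obtain ⟨z, hz, hgz⟩ := hg.2.2 hy
    have hz' : g.toFun z ≠ 0 ∧ g.toFun z ≠ Fin.last (n + 1) := hz
    have hzm : z ∈ nablaInterior m := by
      constructor
      · intro h; exact hz'.1 (by rw [h, g.map_bot'])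
      · intro h; exact hz'.2 (by rw [h, g.map_top'])
    obtain ⟨x, hx, hfx2⟩ := hf.2.2 hzm
    refine ⟨x, ?_, ?_⟩
    · show g.toFun (f.toFun x) ∈ nablaInterior n
      rw [hfx2, hgz]; exact hy
    · show g.toFun (f.toFun x) = y
      rw [hfx2, hgz]

lemma factor_aux {m n : ℕ} (φ : NablaHom m n) :
    ∃ (k : ℕ) (ρ : NablaHom m k) (μ : NablaHom k n),
      ρ.Inert ∧ μ.Active ∧ μ.comp ρ = φ := by
  classical
  set P : ℕ → Prop := fun j => ∀ h : j < m + 2, φ.toFun ⟨j, h⟩ = 0 with hPdef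
  have hP0 : P 0 := fun _ => φ.map_bot'
  set a : ℕ := Nat.findGreatest P (m + 1) with hadef
  have ha_le : a ≤ m + 1 := Nat.findGreatest_le _
  have haP : P a := Nat.findGreatest_spec (Nat.zero_le _) hP0
  have ha0 : φ.toFun ⟨a, by omega⟩ = 0 := haP _
  have hQex : ∃ j, ∃ h : j < m + 2, φ.toFun ⟨j, h⟩ = Fin.last (n + 1) :=
    ⟨m + 1, by omega, φ.map_top'⟩
  set b : ℕ := Nat.find hQex with hbdef
  obtain ⟨hb_lt, hb⟩ : ∃ h : b < m + 2, φ.toFun ⟨b, h⟩ = Fin.last (n + 1) := Nat.find_spec hQex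
  have hb_le : b ≤ m + 1 := Nat.find_le ⟨by omega, φ.map_top'⟩
  have hzero : ∀ j : Fin (m + 2), φ.toFun j = 0 ↔ j.val ≤ a := by
    intro j
    constructor
    · intro hj
      by_contra hlt
      push_neg at hlt
      have hj1 : j.val ≤ m + 1 := by have := j.isLt; omega
      exact Nat.findGreatest_is_greatest hlt hj1 (fun h => by rwa [Fin.eta])
    · intro hj
      have h := φ.monotone' (show j ≤ (⟨a, by omega⟩ : Fin (m + 2)) from Fin.le_def.mpr hj)
      rw [ha0] at h
      exact le_antisymm h (Fin.zero_le _)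
  have hlast : ∀ j : Fin (m + 2), φ.toFun j = Fin.last (n + 1) ↔ b ≤ j.val := by
    intro j
    constructor
    · intro hj
      by_contra hlt
      push_neg at hlt
      exact Nat.find_min hQex hlt ⟨j.isLt, by rwa [Fin.eta]⟩
    · intro hj
      have h := φ.monotone' (show (⟨b, hb_lt⟩ : Fin (m + 2)) ≤ j from Fin.le_def.mpr hj)
      rw [hb] at h
      exact le_antisymm (Fin.le_last _) h
  have hab : a + 1 ≤ b := by
    by_contra h
    push_neg at h
    have h0 : φ.toFun ⟨b, hb_lt⟩ = 0 := (hzero ⟨b, hb_lt⟩).mpr (by show b ≤ a; omega)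
    rw [hb] at h0
    have hcv := congrArg Fin.val h0
    simp only [Fin.val_last, Fin.val_zero] at hcv
    omega
  set k : ℕ := b - a - 1 with hkdef
  have hb2 : b = a + k + 1 := by omega
  let ρ : NablaHom m k :=
    { toFun := fun j => ⟨min (j.val - a) (k + 1), by omega⟩
      monotone' := fun j j' h => by
        simp only [Fin.mk_le_mk]
        have hjj : j.val ≤ j'.val := h
        omega
      map_bot' := by
        ext
        show min ((0 : Fin (m + 2)).val - a) (k + 1) = (0 : Fin (k + 2)).val
        simp only [Fin.val_zero]
        omega
      map_top' := by
        ext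
        show min ((Fin.last (m + 1)).val - a) (k + 1) = (Fin.last (k + 1)).val
        simp only [Fin.val_last]
        omega }
  let μ : NablaHom k n :=
    { toFun := fun i => φ.toFun ⟨a + i.val, by have := i.isLt; omega⟩
      monotone' := fun i i' h => φ.monotone' (by
        simp only [Fin.mk_le_mk]
        have hii : i.val ≤ i'.val := h
        omega)
      map_bot' := (hzero _).mpr (by simp)
      map_top' := (hlast _).mpr (by simp only [Fin.val_last]; omega) }
  have hpre : ∀ j : Fin (m + 2), j ∈ ρ.toFun ⁻¹' nablaInterior k ↔ a < j.val ∧ j.val < b := by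
    intro j
    rw [Set.mem_preimage, mem_interior_iff]
    show 0 < min (j.val - a) (k + 1) ∧ min (j.val - a) (k + 1) < k + 1 ↔ _
    omega
  refine ⟨k, ρ, μ, ?_, ?_, ?_⟩
  · refine ⟨fun j hj => hj, ?_, ?_⟩
    · intro j hj j' hj' hjj'
      rw [hpre] at hj hj'
      have hv : min (j.val - a) (k + 1) = min (j'.val - a) (k + 1) := congrArg Fin.val hjj'
      ext
      omega
    · intro y hy
      rw [mem_interior_iff] at hy
      have hy2 := y.isLt
      refine ⟨⟨a + y.val, by omega⟩, ?_, ?_⟩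
      · rw [hpre]
        show a < a + y.val ∧ a + y.val < b
        omega
      · ext
        show min ((a + y.val) - a) (k + 1) = y.val
        omega
  · constructor
    · intro i hi
      have h2 : a + i.val ≤ a := (hzero _).mp hi
      ext
      simp only [Fin.val_zero]
      omega
    · intro i hi
      have h2 : b ≤ a + i.val := (hlast _).mp hi
      have := i.isLt
      ext
      simp only [Fin.val_last]
      omega
  · refine NablaHom.ext fun j => ?_
    have hj := j.isLt
    set j' : Fin (m + 2) := ⟨a + min (j.val - a) (k + 1), by omega⟩ with hj'def
    show φ.toFun j' = φ.toFun j
    have hj'v : j'.val = a + min (j.val - a) (k + 1) := rfl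
    rcases le_or_gt j.val a with h1 | h1
    · rw [(hzero j').mpr (by omega), (hzero j).mpr h1]
    rcases le_or_gt b j.val with h2 | h2
    · rw [(hlast j').mpr (by omega), (hlast j).mpr h2]
    · congr 1
      ext
      omega

lemma diagonal_aux {va vb vx vy : ℕ} (e : NablaHom va vb) (f : NablaHom va vx)
    (g : NablaHom vb vy) (m : NablaHom vx vy) (he : e.Inert) (hm : m.Active)
    (sq : ∀ j, g.toFun (e.toFun j) = m.toFun (f.toFun j)) :
    ∃! d : NablaHom vb vx, d.comp e = f ∧ m.comp d = g := by
  have hsurj := inert_surjective he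
  have key : ∀ j j', e.toFun j = e.toFun j' → f.toFun j = f.toFun j' := by
    intro j j' hjj'
    by_cases h0 : e.toFun j = 0
    · have h1 : m.toFun (f.toFun j) = 0 := by rw [← sq, h0, g.map_bot']
      have h2 : m.toFun (f.toFun j') = 0 := by rw [← sq, ← hjj', h0, g.map_bot']
      rw [hm.1 _ h1, hm.1 _ h2]
    by_cases h1 : e.toFun j = Fin.last (vb + 1)
    · have h2 : m.toFun (f.toFun j) = Fin.last (vy + 1) := by rw [← sq, h1, g.map_top']
      have h3 : m.toFun (f.toFun j') = Fin.last (vy + 1) := by rw [← sq, ← hjj', h1, g.map_top']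
      rw [hm.2 _ h2, hm.2 _ h3]
    · have hj : j ∈ e.toFun ⁻¹' nablaInterior vb := ⟨h0, h1⟩
      have hj' : j' ∈ e.toFun ⁻¹' nablaInterior vb := ⟨hjj' ▸ h0, hjj' ▸ h1⟩
      exact congrArg f.toFun (he.2.1 hj hj' hjj')
  let s := Function.surjInv hsurj
  have hs : ∀ i, e.toFun (s i) = i := fun i => Function.surjInv_eq hsurj i
  let d : NablaHom vb vx :=
    { toFun := fun i => f.toFun (s i)
      monotone' := by
        intro i i' hii'
        rcases le_or_gt (s i) (s i') with h | h
        · exact f.monotone' h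
        · have h2 : i' ≤ i := by rw [← hs i, ← hs i']; exact e.monotone' h.le
          have hii : i = i' := le_antisymm hii' h2
          rw [hii]
      map_bot' := by
        have h : e.toFun (s 0) = e.toFun 0 := by rw [hs, e.map_bot']
        show f.toFun (s 0) = 0
        rw [key _ _ h, f.map_bot']
      map_top' := by
        have h : e.toFun (s (Fin.last (vb + 1))) = e.toFun (Fin.last (va + 1)) := by
          rw [hs, e.map_top']
        show f.toFun (s (Fin.last (vb + 1))) = Fin.last (vx + 1)
        rw [key _ _ h, f.map_top'] }
  refine ⟨d, ⟨?_, ?_⟩, ?_⟩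
  · refine NablaHom.ext fun j => ?_
    exact key _ _ (hs (e.toFun j))
  · refine NablaHom.ext fun i => ?_
    show m.toFun (f.toFun (s i)) = g.toFun i
    rw [← sq, hs]
  · rintro d' ⟨hd1, hd2⟩
    refine NablaHom.ext fun i => ?_
    have h : d'.toFun (e.toFun (s i)) = f.toFun (s i) :=
      congrFun (congrArg NablaHom.toFun hd1) (s i)
    rw [hs] at h
    exact h

end Aux

/-! ## Statement 8 -/

/-- The classes `I` of inert and `A` of active morphisms form an orthogonal
factorization system `(I, A)` on the category of intervals `∇`. -/
theorem statement8 : OrthFactSys Nabla nablaInert nablaActive := by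
  constructor
  · intro X Y f hf
    obtain ⟨g, hfg, hgf⟩ := hf.out
    have h1 : ∀ i, g.toFun (f.toFun i) = i := fun i => congrFun (congrArg NablaHom.toFun hfg) i
    have h2 : ∀ i, f.toFun (g.toFun i) = i := fun i => congrFun (congrArg NablaHom.toFun hgf) i
    exact inert_of_inverse h1 h2
  · intro X Y f hf
    obtain ⟨g, hfg, hgf⟩ := hf.out
    have h1 : ∀ i, g.toFun (f.toFun i) = i := fun i => congrFun (congrArg NablaHom.toFun hfg) i
    exact active_of_leftInverse h1
  · intro X Y Z f g hf hg
    exact inert_comp hf hg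
  · intro X Y Z f g hf hg
    exact active_comp hf hg
  · intro X Y f
    obtain ⟨k, ρ, μ, h1, h2, h3⟩ := factor_aux f
    exact ⟨k, ρ, μ, h1, h2, h3⟩
  · intro A B X Y e f g m he hm sq
    exact diagonal_aux e f g m he hm (fun j => congrFun (congrArg NablaHom.toFun sq) j)
end

section
/- Let G be a crossed interval group and K a congruence family on G. Then the closure K̄, defined by K̄_φ := {x ∈ RSt^G_φ : ψ*(x) ∈ K_{φ∘ψ} for every ψ such that φ∘ψ is defined and active}, is again a congruence family on G. -/
open CategoryTheory

/-! ## Closure of a congruence family, and the minimal family Inr -/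

/-- The closure `K̄_φ` of a congruence family `K` at `φ`:
`x ∈ K̄_φ` iff `x ∈ RSt^G_φ` and `ψ*(x) ∈ K_{φ∘ψ}` for every `ψ` such that `φ∘ψ` is
defined and active. -/
def closureSet (G : CrossedIntervalGroup) (K : CongruenceFamily G) {m n : ℕ}
    (φ : NablaHom m n) : Set (G.grp m) :=
  {x | x ∈ RSt G φ ∧
    ∀ (l : ℕ) (ψ : NablaHom l m), (φ.comp ψ).Active → G.map ψ x ∈ K.K (φ.comp ψ)}

/-- A congruence family is *proper* if it coincides with its closure. -/
def CongruenceFamily.IsProper {G : CrossedIntervalGroup} (K : CongruenceFamily G) : Prop :=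
  ∀ {m n : ℕ} (φ : NablaHom m n), (K.K φ : Set (G.grp m)) = closureSet G K φ

/-- `Inr^G_φ`, the closure of the trivial congruence family at `φ`:
`x ∈ Inr^G_φ` iff `x ∈ RSt^G_φ` and `ψ*(x) = e` for every `ψ` such that `φ∘ψ` is
defined and active. -/
def InrSet (G : CrossedIntervalGroup) {m n : ℕ} (φ : NablaHom m n) : Set (G.grp m) :=
  {x | x ∈ RSt G φ ∧
    ∀ (l : ℕ) (ψ : NablaHom l m), (φ.comp ψ).Active → G.map ψ x = 1}

/-!
Everything except conjugation invariance is formal: a right stabilizer `x` of `φ` does not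
change `φ ∘ ψ` when `ψ` is replaced by `ψ^x`, so the membership conditions of `K̄_φ` can be
transported along the crossed identities. Conjugation invariance needs one geometric fact:
the action of `G_n` on `∇(⟪l⟫, ⟪n⟫)` preserves active morphisms. A morphism `χ` is active
iff, for every `θ : ⟪1⟫ → ⟪l⟫`, `χ ∘ θ` factors through `⟪0⟫` only if `θ` does; and
factoring through `⟪0⟫` is preserved by the action, since `(ι ∘ c)^z = ι^z ∘ c^{ι*(z)}`.
-/

namespace NablaHom

def point {l : ℕ} (j : Fin (l + 2)) : NablaHom 1 l where
  toFun := ![0, j, Fin.last (l + 1)]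
  monotone' := by
    intro a b hab
    fin_cases a <;> fin_cases b <;> simp_all [Fin.le_last]
  map_bot' := rfl
  map_top' := rfl

def fromZero (l : ℕ) : NablaHom 0 l where
  toFun := ![0, Fin.last (l + 1)]
  monotone' := by
    intro a b hab
    fin_cases a <;> fin_cases b <;> simp_all
  map_bot' := rfl
  map_top' := rfl

theorem eq_point {l : ℕ} (θ : NablaHom 1 l) : θ = point (θ.toFun 1) := by
  refine NablaHom.ext fun i => ?_
  fin_cases i
  · exact θ.map_bot'
  · rfl
  · exact θ.map_top'

theorem comp_point {l n : ℕ} (χ : NablaHom l n) (j : Fin (l + 2)) :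
    χ.comp (point j) = point (χ.toFun j) :=
  eq_point _

def FactorsThroughZero {m l : ℕ} (θ : NablaHom m l) : Prop :=
  ∃ (ι : NablaHom 0 l) (c : NablaHom m 0), θ = ι.comp c

theorem factorsThroughZero_point_iff {l : ℕ} (j : Fin (l + 2)) :
    (point j).FactorsThroughZero ↔ j = 0 ∨ j = Fin.last (l + 1) := by
  constructor
  · rintro ⟨ι, c, h⟩
    have hj : j = ι.toFun (c.toFun 1) := congrArg (fun θ => θ.toFun 1) h
    have hc : ∀ k : Fin 2, k = 0 ∨ k = Fin.last 1 := by decide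
    rcases hc (c.toFun 1) with h0 | h1
    · left; rw [hj, h0, ι.map_bot']
    · right; rw [hj, h1, ι.map_top']
  · rintro (rfl | rfl)
    · exact ⟨fromZero l, point 0, (comp_point (fromZero l) 0).symm⟩
    · exact ⟨fromZero l, point (Fin.last 1), (comp_point (fromZero l) (Fin.last 1)).symm⟩

theorem active_iff_factorsThroughZero {l n : ℕ} (χ : NablaHom l n) :
    χ.Active ↔
      ∀ θ : NablaHom 1 l, (χ.comp θ).FactorsThroughZero → θ.FactorsThroughZero := by
  constructor
  · rintro ⟨h0, h1⟩ θ
    rw [eq_point θ, comp_point, factorsThroughZero_point_iff, factorsThroughZero_point_iff]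
    rintro (hθ | hθ)
    · exact .inl (h0 _ hθ)
    · exact .inr (h1 _ hθ)
  · intro h
    have hpt : ∀ i, (χ.toFun i = 0 ∨ χ.toFun i = Fin.last (n + 1)) →
        i = 0 ∨ i = Fin.last (l + 1) := fun i => by
      simpa only [comp_point, factorsThroughZero_point_iff] using h (point i)
    refine ⟨fun i hi => (hpt i (.inl hi)).resolve_right ?_,
      fun i hi => (hpt i (.inr hi)).resolve_left ?_⟩
    · rintro rfl
      simp [χ.map_top'] at hi
    · rintro rfl
      simp [χ.map_bot'] at hi

theorem Active.of_comp {l m n : ℕ} {χ : NablaHom m n} {θ : NablaHom l m}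
    (h : (χ.comp θ).Active) : θ.Active :=
  ⟨fun i hi => h.1 i (by simp only [comp, Function.comp_apply, hi, χ.map_bot']),
    fun i hi => h.2 i (by simp only [comp, Function.comp_apply, hi, χ.map_top'])⟩

end NablaHom

namespace CrossedIntervalGroup

variable (G : CrossedIntervalGroup)

theorem map_one_s5 {m n : ℕ} (φ : NablaHom m n) : G.map φ 1 = 1 := by
  have h := G.map_mul φ 1 1
  rw [one_mul, G.act_one] at h
  exact left_eq_mul.mp h

theorem inv_act_act {m n : ℕ} (y : G.grp n) (φ : NablaHom m n) :
    G.act y⁻¹ (G.act y φ) = φ := by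
  rw [← G.act_mul, inv_mul_cancel, G.act_one]

theorem act_inv_act {m n : ℕ} (y : G.grp n) (φ : NablaHom m n) :
    G.act y (G.act y⁻¹ φ) = φ := by
  rw [← G.act_mul, mul_inv_cancel, G.act_one]

theorem map_act_inv {m n : ℕ} (φ : NablaHom m n) (y : G.grp n) :
    G.map (G.act y φ) y⁻¹ = (G.map φ y)⁻¹ :=
  eq_inv_of_mul_eq_one_left (by rw [← G.map_mul, inv_mul_cancel, G.map_one_s5])

theorem map_act_conj {m n : ℕ} (φ : NablaHom m n) (g u : G.grp n) :
    G.map (G.act g φ) (g * u * g⁻¹) =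
      G.map (G.act u φ) g * G.map φ u * (G.map φ g)⁻¹ := by
  rw [G.map_mul, G.inv_act_act, G.map_act_inv, G.map_mul]

variable {G}

theorem map_act_of_mem_RSt {l m n : ℕ} {φ : NablaHom m n} {x : G.grp m} (hx : x ∈ RSt G φ)
    (ψ : NablaHom l m) (y : G.grp n) :
    G.map (G.act x ψ) (G.map φ y) = G.map ψ (G.map φ y) := by
  rw [← G.map_comp, hx l ψ, G.map_comp]

theorem map_mem_RSt_comp {l m n : ℕ} {φ : NablaHom m n} {x : G.grp m} (hx : x ∈ RSt G φ)
    (ψ : NablaHom l m) : G.map ψ x ∈ RSt G (φ.comp ψ) := by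
  intro k θ
  calc (φ.comp ψ).comp (G.act (G.map ψ x) θ)
      = φ.comp ((G.act x ψ).comp (G.act (G.map ψ x) θ)) := by rw [← hx l ψ]; rfl
    _ = (φ.comp ψ).comp θ := by rw [← G.act_comp, hx]; rfl

theorem conj_mem_RSt_act {m n : ℕ} {φ : NablaHom m n} {u : G.grp m} (hu : u ∈ RSt G φ)
    (y : G.grp n) : G.map φ y * u * (G.map φ y)⁻¹ ∈ RSt G (G.act y φ) := by
  intro l ψ
  rw [G.act_mul, G.act_mul, ← G.act_inv_act (G.map φ y) ψ, G.inv_act_act, ← G.act_comp,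
    ← G.act_comp, hu]

theorem factorsThroughZero_act {m l : ℕ} (z : G.grp l) {θ : NablaHom m l}
    (h : θ.FactorsThroughZero) : (G.act z θ).FactorsThroughZero := by
  obtain ⟨ι, c, rfl⟩ := h
  exact ⟨_, _, G.act_comp z ι c⟩

theorem factorsThroughZero_act_iff {m l : ℕ} (z : G.grp l) (θ : NablaHom m l) :
    (G.act z θ).FactorsThroughZero ↔ θ.FactorsThroughZero :=
  ⟨fun h => G.inv_act_act z θ ▸ factorsThroughZero_act z⁻¹ h, factorsThroughZero_act z⟩

theorem active_act {l n : ℕ} {χ : NablaHom l n} (hχ : χ.Active) (y : G.grp n) :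
    (G.act y χ).Active := by
  rw [NablaHom.active_iff_factorsThroughZero] at hχ ⊢
  intro θ hθ
  have hcomp : (G.act y χ).comp θ = G.act y (χ.comp (G.act (G.map χ y)⁻¹ θ)) := by
    rw [G.act_comp, G.act_inv_act]
  rw [hcomp, factorsThroughZero_act_iff] at hθ
  simpa only [G.act_inv_act] using factorsThroughZero_act (G.map χ y) (hχ _ hθ)

end CrossedIntervalGroup

namespace CongruenceFamily

variable {G : CrossedIntervalGroup} (K : CongruenceFamily G)

theorem map_act_mem_of_mem_closureSet {l m n : ℕ} {φ : NablaHom m n} {x b : G.grp m}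
    (hx : x ∈ closureSet G K φ) (hb : b ∈ RSt G φ) (ψ : NablaHom l m)
    (hψ : (φ.comp ψ).Active) : G.map (G.act b ψ) x ∈ K.K (φ.comp ψ) := by
  have e := hb l ψ
  simpa only [e] using hx.2 l (G.act b ψ) (by rwa [e])

def closureSubgroup {m n : ℕ} (φ : NablaHom m n) : Subgroup (G.grp m) where
  carrier := closureSet G K φ
  one_mem' := ⟨one_mem _, fun l ψ _ => by rw [G.map_one_s5]; exact one_mem _⟩
  mul_mem' {a b} ha hb := ⟨mul_mem ha.1 hb.1, fun l ψ hψ => by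
    rw [G.map_mul]
    exact mul_mem (K.map_act_mem_of_mem_closureSet ha hb.1 ψ hψ) (hb.2 l ψ hψ)⟩
  inv_mem' {a} ha := ⟨inv_mem ha.1, fun l ψ hψ => by
    have key : G.map (G.act a⁻¹ ψ) a = (G.map ψ a⁻¹)⁻¹ := by
      simpa only [inv_inv] using G.map_act_inv ψ a⁻¹
    rw [← inv_mem_iff, ← key]
    exact K.map_act_mem_of_mem_closureSet ha (inv_mem ha.1) ψ hψ⟩

theorem conj_mem_closureSet_act {m n : ℕ} {φ : NablaHom m n} {u : G.grp m}
    (hu : u ∈ closureSet G K φ) (y : G.grp n) :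
    G.map φ y * u * (G.map φ y)⁻¹ ∈ closureSet G K (G.act y φ) := by
  refine ⟨G.conj_mem_RSt_act hu.1 y, fun l θ hθ => ?_⟩
  obtain ⟨ψ, rfl⟩ : ∃ ψ, θ = G.act (G.map φ y) ψ :=
    ⟨G.act (G.map φ y)⁻¹ θ, (G.act_inv_act _ θ).symm⟩
  rw [← G.act_comp] at hθ ⊢
  have hψ : (φ.comp ψ).Active := by
    simpa only [G.inv_act_act] using G.active_act hθ y⁻¹
  rw [G.map_act_conj, G.map_act_of_mem_RSt hu.1, ← G.map_comp]
  exact (K.conj_act _ y _).mpr ⟨_, hu.2 l ψ hψ, rfl⟩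

def closure : CongruenceFamily G where
  K := K.closureSubgroup
  le_rst _ _ hx := hx.1
  le_post φ χ _ hx :=
    ⟨fun l ψ => congrArg χ.comp (hx.1 l ψ),
      fun l ψ hψ => K.le_post _ χ (hx.2 l ψ (NablaHom.Active.of_comp (χ := χ) hψ))⟩
  map_pre φ ψ _ hx :=
    ⟨G.map_mem_RSt_comp hx.1 ψ, fun l θ hθ => by
      rw [← G.map_comp]
      exact hx.2 l (ψ.comp θ) hθ⟩
  conj_act φ y x := by
    refine ⟨fun hx => ⟨(G.map φ y)⁻¹ * x * G.map φ y, ?_, by group⟩, ?_⟩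
    · have h := K.conj_mem_closureSet_act hx y⁻¹
      rwa [G.inv_act_act, G.map_act_inv, inv_inv] at h
    · rintro ⟨u, hu, rfl⟩
      exact K.conj_mem_closureSet_act hu y

end CongruenceFamily

/-- Let `G` be a crossed interval group and `K` a congruence family on `G`.  Then the
closure `K̄`, defined by `K̄_φ := {x ∈ RSt^G_φ : ψ*(x) ∈ K_{φ∘ψ}` for every `ψ` such
that `φ∘ψ` is defined and active`}`, is again a congruence family on `G`. -/
theorem statement9 (G : CrossedIntervalGroup) (K : CongruenceFamily G) :
    ∃ C : CongruenceFamily G, ∀ {m n : ℕ} (φ : NablaHom m n),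
      (C.K φ : Set (G.grp m)) = closureSet G K φ :=
  ⟨K.closure, fun _ => rfl⟩
end

section
/- Let G be a crossed interval group. If a composite φ∘ψ in ∇ is active, then the action of Inr^G_φ stabilizes ψ: for every x ∈ Inr^G_φ one has ψ^x = ψ. -/
open CategoryTheory

section Statement11Aux

/-- A monotone injective self-map of `Fin N` is the identity. -/
theorem st11_fin_mono_inj {N : ℕ} {f : Fin N → Fin N} (hm : Monotone f)
    (hi : Function.Injective f) : ∀ i, f i = i := by
  have hs : StrictMono f := hm.strictMono_of_injective hi
  have hsur : Function.Surjective f := Finite.surjective_of_injective hi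
  let e : Fin N ≃ Fin N := Equiv.ofBijective f ⟨hi, hsur⟩
  have hsymm : StrictMono e.symm := by
    intro a b hab
    rcases lt_trichotomy (e.symm a) (e.symm b) with h | h | h
    · exact h
    · exact absurd (congrArg e h) (by simpa using hab.ne)
    · have h2 := hs h
      rw [show f (e.symm b) = b from e.apply_symm_apply b,
        show f (e.symm a) = a from e.apply_symm_apply a] at h2
      exact absurd h2 hab.asymm
  intro i
  haveI inst : WellFoundedLT (Fin N) := inferInstance
  refine le_antisymm ?_ (@StrictMono.le_apply _ _ inst _ hs i)
  have h1 : i ≤ e.symm i := @StrictMono.le_apply _ _ inst _ hsymm i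
  have h2 := hs.monotone h1
  rwa [show f (e.symm i) = i from e.apply_symm_apply i] at h2

theorem st11_map_one (G : CrossedIntervalGroup) {m n : ℕ} (φ : NablaHom m n) :
    G.map φ 1 = 1 := by
  have h := G.map_mul φ 1 1
  rw [mul_one, G.act_one] at h
  have : G.map φ 1 * 1 = G.map φ 1 * G.map φ 1 := by rw [mul_one]; exact h
  exact (mul_left_cancel this).symm

theorem st11_rst (G : CrossedIntervalGroup) {m n : ℕ} {φ : NablaHom m n} {x : G.grp m}
    (hx : x ∈ RSt G φ) : ∀ (l : ℕ) (ψ : NablaHom l m), φ.comp (G.act x ψ) = φ.comp ψ := hx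

theorem st11_inv_mem (G : CrossedIntervalGroup) {m n : ℕ} (φ : NablaHom m n)
    {x : G.grp m} (hx : x ∈ InrSet G φ) : x⁻¹ ∈ InrSet G φ := by
  obtain ⟨hr, hm⟩ := hx
  have hrinv : x⁻¹ ∈ RSt G φ := (RSt G φ).inv_mem hr
  refine ⟨hrinv, ?_⟩
  intro l ψ hact
  have h1 : φ.comp (G.act x⁻¹ ψ) = φ.comp ψ := st11_rst G hrinv l ψ
  have hact' : (φ.comp (G.act x⁻¹ ψ)).Active := by rw [h1]; exact hact
  have h2 := G.map_mul ψ x x⁻¹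
  rw [mul_inv_cancel, st11_map_one, hm l _ hact', one_mul] at h2
  exact h2.symm

variable {m n : ℕ} (φ : NablaHom m n)

/-- The set `T = φ⁻¹(interior) ∪ {-∞, ∞}`. -/
def st11T : Finset (Fin (m + 2)) :=
  insert 0 (insert (Fin.last (m+1))
    (Finset.univ.filter fun i => φ.toFun i ≠ 0 ∧ φ.toFun i ≠ Fin.last (n+1)))

theorem st11_mem_T_iff (j : Fin (m+2)) : j ∈ st11T φ ↔
    j = 0 ∨ j = Fin.last (m+1) ∨ (φ.toFun j ≠ 0 ∧ φ.toFun j ≠ Fin.last (n+1)) := by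
  simp [st11T]

theorem st11_zero_mem : (0 : Fin (m+2)) ∈ st11T φ := by simp [st11T]

theorem st11_last_mem : Fin.last (m+1) ∈ st11T φ := by simp [st11T]

theorem st11_card : (st11T φ).card = ((st11T φ).card - 2) + 2 := by
  have h1 : ({0, Fin.last (m+1)} : Finset (Fin (m+2))) ⊆ st11T φ := by
    intro j hj
    simp only [Finset.mem_insert, Finset.mem_singleton] at hj
    rcases hj with rfl | rfl
    · exact st11_zero_mem φ
    · exact st11_last_mem φ
  have h2 : ({0, Fin.last (m+1)} : Finset (Fin (m+2))).card = 2 :=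
    Finset.card_pair (by simp [Fin.ext_iff])
  have := Finset.card_le_card h1
  omega

/-- The enumeration of `T` as a morphism of `∇`. -/
def st11θ : NablaHom ((st11T φ).card - 2) m where
  toFun i := (st11T φ).orderEmbOfFin (st11_card φ) i
  monotone' := ((st11T φ).orderEmbOfFin (st11_card φ)).monotone
  map_bot' := by
    show (st11T φ).orderEmbOfFin (st11_card φ) 0 = 0
    have h : (0 : Fin ((st11T φ).card - 2 + 2)) = ⟨0, by omega⟩ := rfl
    rw [h, Finset.orderEmbOfFin_zero (st11_card φ) (by omega)]
    exact le_antisymm (Finset.min'_le _ 0 (st11_zero_mem φ)) (Fin.zero_le _)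
  map_top' := by
    show (st11T φ).orderEmbOfFin (st11_card φ) (Fin.last ((st11T φ).card - 2 + 1)) = Fin.last (m+1)
    have h : (Fin.last ((st11T φ).card - 2 + 1)) = ⟨(st11T φ).card - 2 + 2 - 1, by omega⟩ := rfl
    rw [h, Finset.orderEmbOfFin_last (st11_card φ) (by omega)]
    exact le_antisymm (Fin.le_last _) (Finset.le_max' _ _ (st11_last_mem φ))

theorem st11θ_inj : Function.Injective (st11θ φ).toFun :=
  fun a b hab => ((st11T φ).orderEmbOfFin (st11_card φ)).injective hab

theorem st11θ_mem (i) : (st11θ φ).toFun i ∈ st11T φ :=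
  Finset.orderEmbOfFin_mem _ _ i

theorem st11θ_active : (φ.comp (st11θ φ)).Active := by
  constructor
  · intro i hi
    have hmem := st11θ_mem φ i
    rw [st11_mem_T_iff] at hmem
    rcases hmem with h | h | h
    · exact st11θ_inj φ (h.trans (st11θ φ).map_bot'.symm)
    · exfalso
      have : φ.toFun (Fin.last (m+1)) = 0 := by rw [← h]; exact hi
      rw [φ.map_top'] at this
      exact absurd this (by simp [Fin.ext_iff])
    · exact absurd hi h.1
  · intro i hi
    have hmem := st11θ_mem φ i
    rw [st11_mem_T_iff] at hmem
    rcases hmem with h | h | h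
    · exfalso
      have : φ.toFun (0 : Fin (m+2)) = Fin.last (n+1) := by rw [← h]; exact hi
      rw [φ.map_bot'] at this
      exact absurd this.symm (by simp [Fin.ext_iff])
    · exact st11θ_inj φ (h.trans (st11θ φ).map_top'.symm)
    · exact absurd hi h.2

/-- Factorization through the enumeration `θ`. -/
def st11factor {l : ℕ} (ρ : NablaHom l m) (hmem : ∀ i, ρ.toFun i ∈ st11T φ) :
    NablaHom l ((st11T φ).card - 2) where
  toFun i := ((st11T φ).orderIsoOfFin (st11_card φ)).symm ⟨ρ.toFun i, hmem i⟩
  monotone' := fun a b hab =>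
    ((st11T φ).orderIsoOfFin (st11_card φ)).symm.monotone
      (show (⟨ρ.toFun a, hmem a⟩ : {x // x ∈ st11T φ}) ≤ ⟨ρ.toFun b, hmem b⟩ from
        ρ.monotone' hab)
  map_bot' := by
    rw [OrderIso.symm_apply_eq]
    apply Subtype.ext
    rw [Finset.coe_orderIsoOfFin_apply]
    exact ρ.map_bot'.trans (st11θ φ).map_bot'.symm
  map_top' := by
    rw [OrderIso.symm_apply_eq]
    apply Subtype.ext
    rw [Finset.coe_orderIsoOfFin_apply]
    exact ρ.map_top'.trans (st11θ φ).map_top'.symm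

theorem st11factor_spec {l : ℕ} (ρ : NablaHom l m) (hmem : ∀ i, ρ.toFun i ∈ st11T φ) :
    (st11θ φ).comp (st11factor φ ρ hmem) = ρ := by
  apply NablaHom.ext
  intro i
  show (st11θ φ).toFun ((st11factor φ ρ hmem).toFun i) = ρ.toFun i
  unfold st11θ st11factor
  simp only
  rw [← Finset.coe_orderIsoOfFin_apply, OrderIso.apply_symm_apply]

end Statement11Aux

/-! ## Statement 11 -/

/-- Let `G` be a crossed interval group.  If a composite `φ∘ψ` in `∇` is active, then
the action of `Inr^G_φ` stabilizes `ψ`: for every `x ∈ Inr^G_φ` one has `ψ^x = ψ`. -/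
theorem statement11 (G : CrossedIntervalGroup) {l m n : ℕ}
    (φ : NablaHom m n) (ψ : NablaHom l m) (h : (φ.comp ψ).Active)
    (x : G.grp m) (hx : x ∈ InrSet G φ) :
    G.act x ψ = ψ := by
  obtain ⟨hr, hmap⟩ := hx
  have hθact := st11θ_active φ
  have hmθx : G.map (st11θ φ) x = 1 := hmap _ _ hθact
  have hxinv := st11_inv_mem G φ ⟨hr, hmap⟩
  have hmθxinv : G.map (st11θ φ) x⁻¹ = 1 := hxinv.2 _ _ hθact
  -- any ρ with φ∘ρ active lands in T
  have hmemOf : ∀ {k' : ℕ} (ρ : NablaHom k' m), (φ.comp ρ).Active →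
      ∀ i, ρ.toFun i ∈ st11T φ := by
    intro k' ρ hact i
    rw [st11_mem_T_iff]
    by_cases h0 : i = 0
    · left; rw [h0, ρ.map_bot']
    by_cases hL : i = Fin.last (k' + 1)
    · right; left; rw [hL, ρ.map_top']
    · exact Or.inr (Or.inr ⟨fun hc => h0 (hact.1 i hc), fun hc => hL (hact.2 i hc)⟩)
  -- factor ψ through θ
  have hmemψ : ∀ i, ψ.toFun i ∈ st11T φ := hmemOf ψ h
  have hψ : (st11θ φ).comp (st11factor φ ψ hmemψ) = ψ := st11factor_spec φ ψ hmemψ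
  -- factor θ' := act x θ through θ
  have hφθ' : φ.comp (G.act x (st11θ φ)) = φ.comp (st11θ φ) := st11_rst G hr _ _
  have hθ'act : (φ.comp (G.act x (st11θ φ))).Active := by rw [hφθ']; exact hθact
  have hmemθ' := hmemOf _ hθ'act
  have hβ : (st11θ φ).comp (st11factor φ _ hmemθ') = G.act x (st11θ φ) :=
    st11factor_spec φ _ hmemθ'
  set β := st11factor φ _ hmemθ' with hβdef
  -- factor θ'' := act x⁻¹ θ through θ
  have hφθ'' : φ.comp (G.act x⁻¹ (st11θ φ)) = φ.comp (st11θ φ) := st11_rst G hxinv.1 _ _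
  have hθ''act : (φ.comp (G.act x⁻¹ (st11θ φ))).Active := by rw [hφθ'']; exact hθact
  have hmemθ'' := hmemOf _ hθ''act
  have hβ₂ : (st11θ φ).comp (st11factor φ _ hmemθ'') = G.act x⁻¹ (st11θ φ) :=
    st11factor_spec φ _ hmemθ''
  set β₂ := st11factor φ _ hmemθ'' with hβ₂def
  -- key: θ = θ ∘ β₂ ∘ β
  have e1 : G.act x⁻¹ (G.act x (st11θ φ)) = st11θ φ := by
    rw [← G.act_mul, inv_mul_cancel, G.act_one]
  have e2 : G.act x⁻¹ (G.act x (st11θ φ)) = (G.act x⁻¹ (st11θ φ)).comp β := by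
    rw [← hβ, G.act_comp, hmθxinv, G.act_one]
  have hkey : (st11θ φ).comp (β₂.comp β) = st11θ φ := by
    rw [← NablaHom.comp_assoc, hβ₂, ← e2, e1]
  -- β is the identity
  have hβinv : ∀ i, β₂.toFun (β.toFun i) = i := by
    intro i
    apply st11θ_inj φ
    exact congrArg (fun χ => NablaHom.toFun χ i) hkey
  have hβinj : Function.Injective β.toFun := by
    intro a b hab
    rw [← hβinv a, ← hβinv b, hab]
  have hβid : β = NablaHom.id _ := by
    apply NablaHom.ext
    intro i
    exact st11_fin_mono_inj β.monotone' hβinj i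
  have hactθ : G.act x (st11θ φ) = st11θ φ := by
    rw [← hβ, hβid, NablaHom.comp_id]
  -- conclude
  calc G.act x ψ = G.act x ((st11θ φ).comp (st11factor φ ψ hmemψ)) := by rw [hψ]
    _ = (G.act x (st11θ φ)).comp (G.act (G.map (st11θ φ) x) (st11factor φ ψ hmemψ)) :=
        G.act_comp x _ _
    _ = (st11θ φ).comp (st11factor φ ψ hmemψ) := by rw [hactθ, hmθx, G.act_one]
    _ = ψ := hψ
end

section
/- Let G be a crossed interval group. For every morphism φ in ∇, the subgroup Inr^G_φ is a normal subgroup of RSt^G_φ. -/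
open CategoryTheory

/-! ## Auxiliary lemmas for Statement 12 -/

namespace Statement12Aux

theorem cig_map_one (G : CrossedIntervalGroup) {m n : ℕ} (ψ : NablaHom m n) :
    G.map ψ (1 : G.grp n) = 1 := by
  have h := G.map_mul ψ 1 1
  rw [one_mul, G.act_one] at h
  exact (left_eq_mul.mp h)

theorem mem_rst {G : CrossedIntervalGroup} {m n : ℕ} {φ : NablaHom m n} {x : G.grp m}
    (hx : x ∈ RSt G φ) :
    ∀ (l : ℕ) (ψ : NablaHom l m), φ.comp (G.act x ψ) = φ.comp ψ := hx

/-- A monotone self-map of `⟪k⟫` with a two-sided inverse is the identity. -/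
theorem eq_id_of_inverse {k : ℕ} (a b : NablaHom k k)
    (h1 : a.comp b = NablaHom.id k) (h2 : b.comp a = NablaHom.id k) :
    a = NablaHom.id k := by
  have hba : ∀ i, b.toFun (a.toFun i) = i := fun i =>
    congrArg (fun f => NablaHom.toFun f i) h2
  have hab : ∀ i, a.toFun (b.toFun i) = i := fun i =>
    congrArg (fun f => NablaHom.toFun f i) h1
  have hainj : Function.Injective a.toFun := Function.LeftInverse.injective hba
  have hbinj : Function.Injective b.toFun := Function.LeftInverse.injective hab
  let E : Fin (k + 2) ≃o Fin (k + 2) :=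
    { toEquiv := ⟨a.toFun, b.toFun, hba, hab⟩,
      map_rel_iff' := fun {x y} => ⟨fun h => by
        have h' : b.toFun (a.toFun x) ≤ b.toFun (a.toFun y) := b.monotone' h
        rwa [hba, hba] at h', fun h => a.monotone' h⟩ }
  have hE : ∀ j, E j = j := fun j => by
    rw [Subsingleton.elim E (OrderIso.refl _)]; rfl
  refine NablaHom.ext fun i => ?_
  show a.toFun i = i
  exact hE i

/-- The canonical inert-type morphism `ι` through which every `ψ` with `φ ∘ ψ`
active factors. -/
theorem exists_iota {m n : ℕ} (φ : NablaHom m n) :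
    ∃ (k : ℕ) (ι : NablaHom k m), (φ.comp ι).Active ∧ Function.Injective ι.toFun ∧
      ∀ (l : ℕ) (ψ : NablaHom l m), (φ.comp ψ).Active → ∃ α : NablaHom l k,
        ψ = ι.comp α := by
  classical
  set s : Finset (Fin (m + 2)) := Finset.univ.filter
    (fun i => i = 0 ∨ i = Fin.last (m + 1) ∨
      (φ.toFun i ≠ 0 ∧ φ.toFun i ≠ Fin.last (n + 1))) with hs
  have hmem : ∀ i, i ∈ s ↔ (i = 0 ∨ i = Fin.last (m + 1) ∨
      (φ.toFun i ≠ 0 ∧ φ.toFun i ≠ Fin.last (n + 1))) := by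
    intro i; simp [hs]
  have h0 : (0 : Fin (m + 2)) ∈ s := (hmem 0).mpr (Or.inl rfl)
  have hlast : Fin.last (m + 1) ∈ s := (hmem _).mpr (Or.inr (Or.inl rfl))
  have hne : (0 : Fin (m + 2)) ≠ Fin.last (m + 1) := by simp [Fin.ext_iff]
  have hcard2 : 2 ≤ s.card := by
    have : ({0, Fin.last (m + 1)} : Finset (Fin (m + 2))) ⊆ s := by
      intro i hi
      rcases Finset.mem_insert.mp hi with rfl | hi
      · exact h0
      · rcases Finset.mem_singleton.mp hi with rfl
        exact hlast
    calc 2 = ({0, Fin.last (m + 1)} : Finset (Fin (m + 2))).card := by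
            rw [Finset.card_insert_of_notMem (by simp [Fin.ext_iff]), Finset.card_singleton]
      _ ≤ s.card := Finset.card_le_card this
  obtain ⟨k, hk⟩ : ∃ k, s.card = k + 2 := ⟨s.card - 2, by omega⟩
  set e : Fin (k + 2) ≃o s := s.orderIsoOfFin hk with he
  -- bottom and top of the enumeration
  have e0 : ((e 0 : s) : Fin (m + 2)) = 0 := by
    have h1 : (e 0 : s) ≤ ⟨0, h0⟩ := by
      have := e.monotone (Fin.zero_le (e.symm ⟨0, h0⟩))
      rwa [e.apply_symm_apply] at this
    exact le_antisymm h1 (Fin.zero_le _)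
  have etop : ((e (Fin.last (k + 1)) : s) : Fin (m + 2)) = Fin.last (m + 1) := by
    have h1 : (⟨Fin.last (m + 1), hlast⟩ : s) ≤ e (Fin.last (k + 1)) := by
      have := e.monotone (Fin.le_last (e.symm ⟨Fin.last (m + 1), hlast⟩))
      rwa [e.apply_symm_apply] at this
    exact le_antisymm (Fin.le_last _) h1
  refine ⟨k, ⟨fun j => ((e j : s) : Fin (m + 2)),
      fun j j' hj => Subtype.coe_le_coe.mpr (e.monotone hj), e0, etop⟩, ?_, ?_, ?_⟩
  · constructor
    · intro i hi
      have hi' : φ.toFun ((e i : s) : Fin (m + 2)) = 0 := hi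
      rcases (hmem _).mp (e i).2 with h | h | h
      · have : (e i : s) = e 0 := Subtype.ext (h.trans e0.symm)
        exact e.injective this
      · rw [h, φ.map_top'] at hi'
        exact absurd hi'.symm (by simp [Fin.ext_iff])
      · exact absurd hi' h.1
    · intro i hi
      have hi' : φ.toFun ((e i : s) : Fin (m + 2)) = Fin.last (n + 1) := hi
      rcases (hmem _).mp (e i).2 with h | h | h
      · rw [h, φ.map_bot'] at hi'
        exact absurd hi' (by simp [Fin.ext_iff])
      · have : (e i : s) = e (Fin.last (k + 1)) := Subtype.ext (h.trans etop.symm)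
        exact e.injective this
      · exact absurd hi' h.2
  · intro i j hij
    exact e.injective (Subtype.ext hij)
  · intro l ψ hψ
    have hm : ∀ j, ψ.toFun j ∈ s := by
      intro j
      rcases eq_or_ne j 0 with rfl | hj0
      · rw [ψ.map_bot']; exact h0
      rcases eq_or_ne j (Fin.last (l + 1)) with rfl | hjt
      · rw [ψ.map_top']; exact hlast
      refine (hmem _).mpr (Or.inr (Or.inr ⟨?_, ?_⟩))
      · intro h; exact hj0 (hψ.1 j h)
      · intro h; exact hjt (hψ.2 j h)
    refine ⟨⟨fun j => e.symm ⟨ψ.toFun j, hm j⟩,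
        fun j j' hj => e.symm.monotone (Subtype.mk_le_mk.mpr (ψ.monotone' hj)),
        ?_, ?_⟩, ?_⟩
    · show e.symm ⟨ψ.toFun 0, hm 0⟩ = 0
      have : (⟨ψ.toFun 0, hm 0⟩ : s) = ⟨0, h0⟩ := Subtype.ext ψ.map_bot'
      rw [this]
      exact e.symm_apply_eq.mpr (Subtype.ext e0.symm)
    · show e.symm ⟨ψ.toFun (Fin.last (l + 1)), hm _⟩ = Fin.last (k + 1)
      have : (⟨ψ.toFun (Fin.last (l + 1)), hm _⟩ : s) = ⟨Fin.last (m + 1), hlast⟩ :=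
        Subtype.ext ψ.map_top'
      rw [this]
      exact e.symm_apply_eq.mpr (Subtype.ext etop.symm)
    · refine NablaHom.ext fun i => ?_
      show ψ.toFun i = ((e (e.symm ⟨ψ.toFun i, hm i⟩) : s) : Fin (m + 2))
      rw [e.apply_symm_apply]

end Statement12Aux


/-! ## Statement 12 -/

/-- Let `G` be a crossed interval group.  For every morphism `φ` in `∇`, `Inr^G_φ` is
a normal subgroup of `RSt^G_φ`: it is a subgroup (contains the unit, and is closed
under multiplication and inverses), it is contained in `RSt^G_φ`, and it is stable
under conjugation by elements of `RSt^G_φ`. -/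
theorem statement12 (G : CrossedIntervalGroup) {m n : ℕ} (φ : NablaHom m n) :
    ((1 : G.grp m) ∈ InrSet G φ) ∧
    (∀ x y : G.grp m, x ∈ InrSet G φ → y ∈ InrSet G φ → x * y ∈ InrSet G φ) ∧
    (∀ x : G.grp m, x ∈ InrSet G φ → x⁻¹ ∈ InrSet G φ) ∧
    (∀ x : G.grp m, x ∈ InrSet G φ → x ∈ RSt G φ) ∧
    (∀ (u x : G.grp m), u ∈ InrSet G φ → x ∈ RSt G φ → x * u * x⁻¹ ∈ InrSet G φ) := by
  open Statement12Aux in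
  constructor
  · exact ⟨(RSt G φ).one_mem, fun l ψ _ => cig_map_one G ψ⟩
  constructor
  · rintro x y ⟨hx1, hx2⟩ ⟨hy1, hy2⟩
    refine ⟨(RSt G φ).mul_mem hx1 hy1, fun l ψ hψ => ?_⟩
    have hψ' : (φ.comp (G.act y ψ)).Active := by
      rw [mem_rst hy1 l ψ]; exact hψ
    rw [G.map_mul, hx2 l _ hψ', hy2 l ψ hψ, one_mul]
  constructor
  · rintro x ⟨hx1, hx2⟩
    refine ⟨(RSt G φ).inv_mem hx1, fun l ψ hψ => ?_⟩
    have h := G.map_mul ψ x x⁻¹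
    rw [mul_inv_cancel, cig_map_one] at h
    have hψ' : (φ.comp (G.act x⁻¹ ψ)).Active := by
      rw [mem_rst ((RSt G φ).inv_mem hx1) l ψ]; exact hψ
    rw [hx2 l _ hψ', one_mul] at h
    exact h.symm
  constructor
  · rintro x ⟨hx1, _⟩; exact hx1
  · rintro u x ⟨hu1, hu2⟩ hx
    have hxi : x⁻¹ ∈ RSt G φ := (RSt G φ).inv_mem hx
    have hui : u⁻¹ ∈ RSt G φ := (RSt G φ).inv_mem hu1
    obtain ⟨k, ι, hact, hinj, hfac⟩ := exists_iota φ
    have hA : ∀ (y : G.grp m), y ∈ RSt G φ → (φ.comp (G.act y ι)).Active := by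
      intro y hy
      rw [mem_rst hy k ι]; exact hact
    obtain ⟨a, ha⟩ := hfac k (G.act u ι) (hA u hu1)
    obtain ⟨b, hb⟩ := hfac k (G.act u⁻¹ ι) (hA u⁻¹ hui)
    have hmu : G.map ι u = 1 := hu2 k ι hact
    have hmui : G.map ι u⁻¹ = 1 := by
      have h := G.map_mul ι u u⁻¹
      rw [mul_inv_cancel, cig_map_one, hu2 k _ (hA u⁻¹ hui), one_mul] at h
      exact h.symm
    have hcancel : ∀ c : NablaHom k k, ι.comp c = ι → c = NablaHom.id k := by
      intro c hc
      refine NablaHom.ext fun i => ?_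
      show c.toFun i = i
      exact hinj (congrArg (fun f => NablaHom.toFun f i) hc)
    have hab : a.comp b = NablaHom.id k := by
      refine hcancel _ ?_
      have h : G.act (u * u⁻¹) ι = ι := by rw [mul_inv_cancel, G.act_one]
      rw [G.act_mul, hb, G.act_comp, ha, hmu, G.act_one, NablaHom.comp_assoc] at h
      exact h
    have hba : b.comp a = NablaHom.id k := by
      refine hcancel _ ?_
      have h : G.act (u⁻¹ * u) ι = ι := by rw [inv_mul_cancel, G.act_one]
      rw [G.act_mul, ha, G.act_comp, hb, hmui, G.act_one, NablaHom.comp_assoc] at h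
      exact h
    have haid : a = NablaHom.id k := eq_id_of_inverse a b hab hba
    have hActu : G.act u ι = ι := by rw [ha, haid, NablaHom.comp_id]
    have hkey : G.map ι (x * u * x⁻¹) = 1 := by
      have e2 : G.map ι (u * x⁻¹) = G.map ι x⁻¹ := by
        rw [G.map_mul, hu2 k _ (hA x⁻¹ hxi), one_mul]
      have e3 : G.act (u * x⁻¹) ι = G.act x⁻¹ ι := by
        obtain ⟨c, hc⟩ := hfac k (G.act x⁻¹ ι) (hA x⁻¹ hxi)
        rw [G.act_mul, hc, G.act_comp, hActu, hmu, G.act_one, ← hc]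
      have e4 : G.map (G.act x⁻¹ ι) x * G.map ι x⁻¹ = 1 := by
        have h := G.map_mul ι x x⁻¹
        rw [mul_inv_cancel, cig_map_one] at h
        exact h.symm
      rw [mul_assoc, G.map_mul, e2, e3, e4]
    refine ⟨(RSt G φ).mul_mem ((RSt G φ).mul_mem hx hu1) hxi, fun l ψ hψ => ?_⟩
    obtain ⟨α, hα⟩ := hfac l ψ hψ
    rw [hα, G.map_comp, hkey, cig_map_one]
end

section
/- Let G be a crossed interval group and K a proper congruence family on G. Then for every active morphism μ and every inert morphism ρ in ∇ such that μ∘ρ is defined, the composite map K_μ → K_{μ∘ρ} → K_{μ∘ρ}/Inr^G_{μ∘ρ}, given by x ↦ ρ*(x) followed by the projection onto the quotient by the normal subgroup Inr^G_{μ∘ρ} ⊆ K_{μ∘ρ}, is bijective. -/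
open CategoryTheory

/-! ## Auxiliary development for Statement 13 -/

theorem mem_RSt {G : CrossedIntervalGroup} {m n : ℕ} {φ : NablaHom m n} {x : G.grp m} :
    x ∈ RSt G φ ↔ ∀ (l : ℕ) (ψ : NablaHom l m), φ.comp (G.act x ψ) = φ.comp ψ :=
  Iff.rfl

theorem fin_cases3 {m : ℕ} (i : Fin (m + 2)) :
    i = 0 ∨ i = Fin.last (m + 1) ∨ i ∈ nablaInterior m := by
  by_cases h0 : i = 0
  · exact Or.inl h0
  by_cases hl : i = Fin.last (m + 1)
  · exact Or.inr (Or.inl hl)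
  exact Or.inr (Or.inr ⟨h0, hl⟩)

open Classical in
/-- The underlying function of the canonical section of an inert morphism. -/
noncomputable def sectFun {l m : ℕ} (ρ : NablaHom l m) (hρ : ρ.Inert) :
    Fin (m + 2) → Fin (l + 2) := fun i =>
  if h : i ∈ nablaInterior m then ((Set.mem_image _ _ _).mp (hρ.2.2 h)).choose
  else if i = 0 then 0 else Fin.last (l + 1)

theorem sectFun_rho {l m : ℕ} (ρ : NablaHom l m) (hρ : ρ.Inert) (i : Fin (m + 2)) :
    ρ.toFun (sectFun ρ hρ i) = i := by
  classical
  unfold sectFun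
  by_cases h : i ∈ nablaInterior m
  · rw [dif_pos h]
    exact ((Set.mem_image _ _ _).mp (hρ.2.2 h)).choose_spec.2
  · rw [dif_neg h]
    by_cases h0 : i = 0
    · rw [if_pos h0, ρ.map_bot', h0]
    · have hl : i = Fin.last (m + 1) := by
        by_contra hl
        exact h ⟨h0, hl⟩
      rw [if_neg h0, ρ.map_top', hl]

theorem sectFun_zero {l m : ℕ} (ρ : NablaHom l m) (hρ : ρ.Inert) :
    sectFun ρ hρ 0 = 0 := by
  classical
  unfold sectFun
  rw [dif_neg (fun h => h.1 rfl), if_pos rfl]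

theorem sectFun_last {l m : ℕ} (ρ : NablaHom l m) (hρ : ρ.Inert) :
    sectFun ρ hρ (Fin.last (m + 1)) = Fin.last (l + 1) := by
  have h1 : (Fin.last (m + 1) : Fin (m + 2)) ≠ 0 := by
    simp [Fin.ext_iff]
  classical
  unfold sectFun
  rw [dif_neg (fun h => h.2 rfl), if_neg h1]

theorem sectFun_mono {l m : ℕ} (ρ : NablaHom l m) (hρ : ρ.Inert) :
    Monotone (sectFun ρ hρ) := by
  intro i i' hle
  rcases fin_cases3 i with rfl | rfl | hi
  · rw [sectFun_zero]
    exact Fin.zero_le _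
  · have hi' : i' = Fin.last (m + 1) := le_antisymm (Fin.le_last _) hle
    rw [hi']
  · rcases fin_cases3 i' with rfl | rfl | _
    · exact absurd (Fin.le_zero_iff.mp hle) hi.1
    · rw [sectFun_last]
      exact Fin.le_last _
    · by_contra h
      push_neg at h
      have h2 : ρ.toFun (sectFun ρ hρ i') ≤ ρ.toFun (sectFun ρ hρ i) := ρ.monotone' h.le
      rw [sectFun_rho, sectFun_rho] at h2
      have h3 : i = i' := le_antisymm hle h2
      rw [h3] at h
      exact lt_irrefl _ h

/-- The canonical section of an inert morphism. -/
noncomputable def inertSection {l m : ℕ} (ρ : NablaHom l m) (hρ : ρ.Inert) : NablaHom m l where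
  toFun := sectFun ρ hρ
  monotone' := sectFun_mono ρ hρ
  map_bot' := sectFun_zero ρ hρ
  map_top' := sectFun_last ρ hρ

theorem inertSection_comp {l m : ℕ} (ρ : NablaHom l m) (hρ : ρ.Inert) :
    ρ.comp (inertSection ρ hρ) = NablaHom.id m :=
  NablaHom.ext fun i => sectFun_rho ρ hρ i

theorem inertSection_left {l m : ℕ} (ρ : NablaHom l m) (hρ : ρ.Inert) (j : Fin (l + 2))
    (hj : ρ.toFun j ∈ nablaInterior m) :
    sectFun ρ hρ (ρ.toFun j) = j := by
  have h1 : ρ.toFun (sectFun ρ hρ (ρ.toFun j)) = ρ.toFun j := sectFun_rho ρ hρ _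
  have h2 : sectFun ρ hρ (ρ.toFun j) ∈ ρ.toFun ⁻¹' nablaInterior m := by
    show ρ.toFun (sectFun ρ hρ (ρ.toFun j)) ∈ nablaInterior m
    rw [h1]; exact hj
  exact hρ.2.1 h2 hj h1

/-- The key geometric fact: if `(μ∘ρ)∘ψ` is active with `μ` active and `ρ` inert, then
`σ∘ρ∘ψ = ψ` where `σ` is the canonical section of `ρ`. -/
theorem inert_tau_fix {l m n k : ℕ} (μ : NablaHom m n) (ρ : NablaHom l m)
    (hμ : μ.Active) (hρ : ρ.Inert) (ψ : NablaHom k l)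
    (hact : ((μ.comp ρ).comp ψ).Active) :
    ((inertSection ρ hρ).comp ρ).comp ψ = ψ := by
  apply NablaHom.ext
  intro j
  show sectFun ρ hρ (ρ.toFun (ψ.toFun j)) = ψ.toFun j
  rcases fin_cases3 j with rfl | rfl | hj
  · rw [ψ.map_bot', ρ.map_bot', sectFun_zero]
  · rw [ψ.map_top', ρ.map_top', sectFun_last]
  · have hne0 : ρ.toFun (ψ.toFun j) ≠ 0 := by
      intro h
      apply hj.1
      apply hact.1 j
      show μ.toFun (ρ.toFun (ψ.toFun j)) = 0
      rw [h, μ.map_bot']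
    have hnel : ρ.toFun (ψ.toFun j) ≠ Fin.last (m + 1) := by
      intro h
      apply hj.2
      apply hact.2 j
      show μ.toFun (ρ.toFun (ψ.toFun j)) = Fin.last (n + 1)
      rw [h, μ.map_top']
    exact inertSection_left ρ hρ _ ⟨hne0, hnel⟩

/-! ## Statement 13 -/

/-- Let `G` be a crossed interval group and `K` a proper congruence family on `G`.
Then for every active morphism `μ` and every inert morphism `ρ` in `∇` such that
`μ∘ρ` is defined, the composite map `K_μ → K_{μ∘ρ} → K_{μ∘ρ}/Inr^G_{μ∘ρ}`, given by
`x ↦ ρ*(x)` followed by the projection onto the quotient by `Inr^G_{μ∘ρ}`, is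
bijective (injectivity and surjectivity being stated on `Inr`-cosets). -/
theorem statement13 (G : CrossedIntervalGroup) (K : CongruenceFamily G)
    (hK : K.IsProper) {l m n : ℕ} (μ : NablaHom m n) (ρ : NablaHom l m)
    (hμ : μ.Active) (hρ : ρ.Inert) :
    (∀ x ∈ K.K μ, G.map ρ x ∈ K.K (μ.comp ρ)) ∧
    (∀ x ∈ K.K μ, ∀ x' ∈ K.K μ,
        G.map ρ x * (G.map ρ x')⁻¹ ∈ InrSet G (μ.comp ρ) → x = x') ∧
    (∀ z ∈ K.K (μ.comp ρ), ∃ x ∈ K.K μ,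
        G.map ρ x * z⁻¹ ∈ InrSet G (μ.comp ρ)) := by
  classical
  set σ := inertSection ρ hρ with hσdef
  have hρσ : ρ.comp σ = NablaHom.id m := inertSection_comp ρ hρ
  have hμρσ : (μ.comp ρ).comp σ = μ := by
    rw [NablaHom.comp_assoc, hρσ, NablaHom.comp_id]
  have hsect : ∀ x : G.grp m, G.map σ (G.map ρ x) = x := by
    intro x
    rw [← G.map_comp, hρσ, G.map_id]
  have h1 : ∀ x ∈ K.K μ, G.map ρ x ∈ K.K (μ.comp ρ) := fun x hx => K.map_pre μ ρ x hx
  refine ⟨h1, ?_, ?_⟩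
  · -- injectivity
    intro x hx x' hx' hw
    obtain ⟨-, hw2⟩ := hw
    have hx'ρ : G.map ρ x' ∈ K.K (μ.comp ρ) := h1 x' hx'
    have hrst : G.map ρ x' ∈ RSt G (μ.comp ρ) := K.le_rst _ hx'ρ
    have hact : ((μ.comp ρ).comp (G.act (G.map ρ x') σ)).Active := by
      rw [mem_RSt.mp hrst m σ, hμρσ]; exact hμ
    have hone : G.map (G.act (G.map ρ x') σ) (G.map ρ x * (G.map ρ x')⁻¹) = 1 :=
      hw2 m _ hact
    calc x = G.map σ (G.map ρ x) := (hsect x).symm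
      _ = G.map σ ((G.map ρ x * (G.map ρ x')⁻¹) * G.map ρ x') := by group
      _ = G.map (G.act (G.map ρ x') σ) (G.map ρ x * (G.map ρ x')⁻¹) * G.map σ (G.map ρ x') :=
          G.map_mul σ _ _
      _ = x' := by rw [hone, one_mul, hsect]
  · -- surjectivity
    intro z hz
    refine ⟨G.map σ z, ?_, ?_⟩
    · have := K.map_pre (μ.comp ρ) σ z hz
      rwa [hμρσ] at this
    · set τ := σ.comp ρ with hτdef
      have hmapτ : G.map ρ (G.map σ z) = G.map τ z := (G.map_comp σ ρ z).symm
      have hμρτ : (μ.comp ρ).comp τ = μ.comp ρ := by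
        have e : (μ.comp ρ).comp τ = μ.comp ((ρ.comp σ).comp ρ) := rfl
        rw [e, hρσ, NablaHom.id_comp]
      have hτz : G.map τ z ∈ K.K (μ.comp ρ) := by
        have := K.map_pre (μ.comp ρ) τ z hz
        rwa [hμρτ] at this
      have hwK : G.map τ z * z⁻¹ ∈ K.K (μ.comp ρ) := mul_mem hτz (inv_mem hz)
      rw [hmapτ]
      refine ⟨K.le_rst _ hwK, ?_⟩
      intro k ψ hactψ
      have hzrst : z ∈ RSt G (μ.comp ρ) := K.le_rst _ hz
      have hzinv : z⁻¹ ∈ RSt G (μ.comp ρ) := inv_mem hzrst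
      set ψ₀ := G.act z⁻¹ ψ with hψ₀def
      have hcomp0 : (μ.comp ρ).comp ψ₀ = (μ.comp ρ).comp ψ := mem_RSt.mp hzinv k ψ
      have hact0 : ((μ.comp ρ).comp ψ₀).Active := by rw [hcomp0]; exact hactψ
      have hτψ₀ : τ.comp ψ₀ = ψ₀ := inert_tau_fix μ ρ hμ hρ ψ₀ hact0
      have hψback : G.act z ψ₀ = ψ := by
        rw [hψ₀def, ← G.act_mul, mul_inv_cancel, G.act_one]
      have e1 : G.map ψ₀ ((G.map τ z * z⁻¹) * z) =
          G.map (G.act z ψ₀) (G.map τ z * z⁻¹) * G.map ψ₀ z := G.map_mul ψ₀ _ z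
      rw [hψback] at e1
      have e2 : (G.map τ z * z⁻¹) * z = G.map τ z := by group
      rw [e2] at e1
      have e3 : G.map ψ₀ (G.map τ z) = G.map ψ₀ z := by
        rw [← G.map_comp τ ψ₀ z, hτψ₀]
      rw [e3] at e1
      have e4 : G.map ψ (G.map τ z * z⁻¹) * G.map ψ₀ z = 1 * G.map ψ₀ z := by
        rw [one_mul]; exact e1.symm
      exact mul_right_cancel e4
end

section
/- Let G be a crossed interval group and φ : ⟪m⟫ → ⟪n⟫ a morphism of ∇. For 1 ≤ j ≤ n write φ⁻¹{j} = {i_1 < … < i_{k_j}} with k_j := #φ⁻¹{j}, and let δ^{(φ)}_j : ⟪k_j⟫ → ⟪m⟫ be the morphism of ∇ with δ^{(φ)}_j(-∞) = -∞, δ^{(φ)}_j(∞) = ∞, and δ^{(φ)}_j(s) = i_s for 1 ≤ s ≤ k_j. Then the map RSt^G_φ → G_{k_1} × … × G_{k_n}, x ↦ (δ^{(φ)*}_1(x), …, δ^{(φ)*}_n(x)), is a group homomorphism, and its kernel contains the subgroup Inr^G_φ ⊆ RSt^G_φ. -/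
open CategoryTheory

section Statement16Aux

open Finset

/-- The `t`-th interior point of `⟪k⟫`. -/
def nemb {k : ℕ} (t : Fin k) : Fin (k + 2) := ⟨t.1 + 1, by omega⟩

lemma nemb_mem {k : ℕ} (t : Fin k) : nemb t ∈ nablaInterior k := by
  constructor
  · intro h
    have := congrArg Fin.val h
    simp [nemb] at this
  · intro h
    have := congrArg Fin.val h
    simp [nemb, Fin.last] at this
    omega

lemma nemb_strictMono {k : ℕ} : StrictMono (nemb (k := k)) := by
  intro a b h
  have hv : a.1 < b.1 := h
  simp only [nemb, Fin.lt_def]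
  omega

lemma nabla_cases {k : ℕ} (i : Fin (k + 2)) :
    i = 0 ∨ i = Fin.last (k + 1) ∨ ∃ t : Fin k, i = nemb t := by
  rcases Nat.eq_zero_or_pos i.1 with h0 | h0
  · left; exact Fin.ext h0
  · rcases eq_or_lt_of_le (Nat.le_of_lt_succ i.2) with hl | hl
    · right; left; exact Fin.ext hl
    · right; right
      exact ⟨⟨i.1 - 1, by omega⟩, Fin.ext (by simp [nemb]; omega)⟩

/-- Test morphism `⟪1⟫ → ⟪k⟫` hitting `c` at the interior point. -/
def npick {k : ℕ} (c : Fin (k + 2)) : NablaHom 1 k where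
  toFun i := if i.1 = 0 then 0 else if i.1 = 1 then c else Fin.last (k + 1)
  monotone' := by
    intro a b hab
    fin_cases a <;> fin_cases b <;>
      simp_all [Fin.le_def] <;> omega
  map_bot' := rfl
  map_top' := rfl

lemma npick_one {k : ℕ} (c : Fin (k + 2)) : (npick c).toFun ⟨1, by omega⟩ = c := rfl

end Statement16Aux


/-- Key lemma: if `y` right-stabilizes `φ`, then `y` acts trivially on the fiber
enumeration `δ = δ^{(φ)}_j`. -/
theorem act_delta_eq (G : CrossedIntervalGroup) {m n kj : ℕ} (φ : NablaHom m n)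
    (j : Fin (n + 2)) (hj : j ∈ nablaInterior n)
    (hkj : ({i | φ.toFun i = j} : Set (Fin (m + 2))).ncard = kj)
    (δ : NablaHom kj m)
    (hδ1 : StrictMonoOn δ.toFun (nablaInterior kj))
    (hδ2 : Set.BijOn δ.toFun (nablaInterior kj) {i | φ.toFun i = j})
    (y : G.grp m)
    (hy : ∀ (l : ℕ) (ψ : NablaHom l m), φ.comp (G.act y ψ) = φ.comp ψ) :
    G.act y δ = δ := by
  have hj0 : j ≠ 0 := hj.1
  have hjl : j ≠ Fin.last (n + 1) := hj.2
  have h0lN : (0 : Fin (n + 2)) ≠ Fin.last (n + 1) := by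
    intro h
    have := congrArg Fin.val h
    simp [Fin.last] at this
  have hfib : ∀ t : Fin kj, φ.toFun (δ.toFun (nemb t)) = j :=
    fun t => hδ2.mapsTo (nemb_mem t)
  have phiδ0 : φ.toFun (δ.toFun 0) = 0 := by rw [δ.map_bot', φ.map_bot']
  have phiδl : φ.toFun (δ.toFun (Fin.last (kj + 1))) = Fin.last (n + 1) := by
    rw [δ.map_top', φ.map_top']
  -- δ is injective on all of `⟪kj⟫`
  have injδ : Function.Injective δ.toFun := by
    intro a b hab
    have hφab : φ.toFun (δ.toFun a) = φ.toFun (δ.toFun b) := by rw [hab]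
    rcases nabla_cases a with rfl | rfl | ⟨s, rfl⟩ <;>
      rcases nabla_cases b with rfl | rfl | ⟨t, rfl⟩
    · rfl
    · exact absurd (phiδ0 ▸ phiδl ▸ hφab) h0lN
    · exact absurd (phiδ0 ▸ (hfib t) ▸ hφab) (Ne.symm hj0)
    · exact absurd (phiδ0 ▸ phiδl ▸ hφab.symm) h0lN
    · rfl
    · exact absurd (phiδl ▸ (hfib t) ▸ hφab) (Ne.symm hjl)
    · exact absurd (phiδ0 ▸ (hfib s) ▸ hφab.symm) (Ne.symm hj0)
    · exact absurd (phiδl ▸ (hfib s) ▸ hφab.symm) (Ne.symm hjl)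
    · exact hδ1.injOn (nemb_mem s) (nemb_mem t) hab
  set ψ := G.act y δ with hψdef
  have hcomp : φ.comp ψ = φ.comp δ := hy _ δ
  -- ψ is injective, since `act y` is invertible and δ is injective
  have injψ : Function.Injective ψ.toFun := by
    intro a b hab
    have hcι : ψ.comp (npick a) = ψ.comp (npick b) := by
      apply NablaHom.ext
      intro i
      fin_cases i <;> simp [NablaHom.comp, npick, hab]
    have h2 := congrArg (G.act y⁻¹) hcι
    rw [G.act_comp, G.act_comp] at h2
    have hψδ : G.act y⁻¹ ψ = δ := by
      rw [hψdef, ← G.act_mul, inv_mul_cancel, G.act_one]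
    rw [hψδ] at h2
    have h3 : G.act (G.map ψ y⁻¹) (npick a) = G.act (G.map ψ y⁻¹) (npick b) := by
      apply NablaHom.ext
      intro i
      exact injδ (congrFun (congrArg NablaHom.toFun h2) i)
    have h4 : npick a = npick b := by
      have h5 := congrArg (G.act (G.map ψ y⁻¹)⁻¹) h3
      rwa [← G.act_mul, ← G.act_mul, inv_mul_cancel, G.act_one, G.act_one] at h5
    have h6 := congrFun (congrArg NablaHom.toFun h4) ⟨1, by omega⟩
    simpa [npick] using h6
  -- the fiber of `j` as a finset
  classical
  have hFcard : (Finset.univ.filter (fun i => φ.toFun i = j)).card = kj := by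
    rw [← hkj, Set.ncard_eq_toFinset_card']
    congr 1
    ext i
    simp
  have hψfib : ∀ t : Fin kj, φ.toFun (ψ.toFun (nemb t)) = j := by
    intro t
    have h := congrFun (congrArg NablaHom.toFun hcomp) (nemb t)
    exact h.trans (hfib t)
  have hfmono : StrictMono (fun t : Fin kj => ψ.toFun (nemb t)) :=
    fun a b h => (ψ.monotone'.strictMono_of_injective injψ) (nemb_strictMono h)
  have hgmono : StrictMono (fun t : Fin kj => δ.toFun (nemb t)) :=
    fun a b h => hδ1 (nemb_mem a) (nemb_mem b) (nemb_strictMono h)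
  have hfeq : (fun t : Fin kj => ψ.toFun (nemb t)) = (fun t : Fin kj => δ.toFun (nemb t)) :=
    (Finset.orderEmbOfFin_unique hFcard
        (fun t => Finset.mem_filter.2 ⟨Finset.mem_univ _, hψfib t⟩) hfmono).trans
      (Finset.orderEmbOfFin_unique hFcard
        (fun t => Finset.mem_filter.2 ⟨Finset.mem_univ _, hfib t⟩) hgmono).symm
  apply NablaHom.ext
  intro i
  rcases nabla_cases i with rfl | rfl | ⟨t, rfl⟩
  · rw [ψ.map_bot', δ.map_bot']
  · rw [ψ.map_top', δ.map_top']
  · exact congrFun hfeq t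


/-! ## Statement 16 -/

/-- Let `G` be a crossed interval group and `φ : ⟪m⟫ → ⟪n⟫` a morphism of `∇`.  For
`1 ≤ j ≤ n` let `k_j := #φ⁻¹{j}` and let `δ^{(φ)}_j : ⟪k_j⟫ → ⟪m⟫` be the morphism of
`∇` enumerating `φ⁻¹{j}` in increasing order (characterized by restricting to a
monotone bijection from the interior of `⟪k_j⟫` onto `φ⁻¹{j}`).  Then the map
`RSt^G_φ → G_{k_1} × … × G_{k_n}`, `x ↦ (δ^{(φ)*}_1(x), …, δ^{(φ)*}_n(x))`, is a
group homomorphism whose kernel contains `Inr^G_φ ⊆ RSt^G_φ`. -/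
theorem statement16 (G : CrossedIntervalGroup) {m n : ℕ} (φ : NablaHom m n)
    (k : Fin (n + 2) → ℕ)
    (hk : ∀ j : Fin (n + 2), j ∈ nablaInterior n →
        ({i | φ.toFun i = j} : Set (Fin (m + 2))).ncard = k j)
    (δ : ∀ j : Fin (n + 2), j ∈ nablaInterior n → NablaHom (k j) m)
    (hδ : ∀ (j : Fin (n + 2)) (hj : j ∈ nablaInterior n),
        StrictMonoOn (δ j hj).toFun (nablaInterior (k j)) ∧
        Set.BijOn (δ j hj).toFun (nablaInterior (k j)) {i | φ.toFun i = j}) :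
    (∀ x ∈ RSt G φ, ∀ y ∈ RSt G φ, ∀ (j : Fin (n + 2)) (hj : j ∈ nablaInterior n),
        G.map (δ j hj) (x * y) = G.map (δ j hj) x * G.map (δ j hj) y) ∧
    (∀ x ∈ InrSet G φ, ∀ (j : Fin (n + 2)) (hj : j ∈ nablaInterior n),
        G.map (δ j hj) x = 1) := by
  constructor
  · intro x hx y hy j hj
    have key := act_delta_eq G φ j hj (hk j hj) (δ j hj) (hδ j hj).1 (hδ j hj).2 y
      (fun l ψ => hy l ψ)
    rw [G.map_mul, key]
  · intro x hx j hj
    apply hx.2 _ (δ j hj)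
    constructor
    · intro i hi
      rcases nabla_cases i with rfl | rfl | ⟨t, rfl⟩
      · rfl
      · exfalso
        have h := ((φ.comp (δ j hj)).map_top').symm.trans hi
        have := congrArg Fin.val h
        simp [Fin.last] at this
      · exfalso
        have hmem := (hδ j hj).2.mapsTo (nemb_mem t)
        exact absurd ((hmem : φ.toFun ((δ j hj).toFun (nemb t)) = j).symm.trans hi) hj.1
    · intro i hi
      rcases nabla_cases i with rfl | rfl | ⟨t, rfl⟩
      · exfalso
        have h := ((φ.comp (δ j hj)).map_bot').symm.trans hi
        have := congrArg Fin.val h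
        simp [Fin.last] at this
      · rfl
      · exfalso
        have hmem := (hδ j hj).2.mapsTo (nemb_mem t)
        exact absurd ((hmem : φ.toFun ((δ j hj).toFun (nemb t)) = j).symm.trans hi) hj.2
end
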